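/- arXiv:2509.00169 — 2 statements merged into one kernel-verified Lean document; each statement's English description precedes it below -/
import Mathlib

section
/- Fix z₀ ∈ ℝ, T ∈ ℕ, and a variance schedule β_1, …, β_T ∈ (0, 1). Let ε_1, …, ε_T be i.i.d. standard Gaussian random variables, and define z_t recursively by z_t = √(1−β_t)·z_{t−1} + √β_t·ε_t starting from the constant z₀. Then for every t ≤ T, the random variable z_t is distributed as the Gaussian measure with mean √ᾱ_t·z₀ and variance 1 − ᾱ_t, where ᾱ_t = ∏_{s=1}^{t} (1 − β_s). -/
open MeasureTheory ProbabilityTheory Real Finset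
open scoped NNReal
open scoped ENNReal

lemma my_gaussian_pdf_conv (v w : ℝ≥0) (hv : v ≠ 0) (hw : w ≠ 0) (x a : ℝ) :
    gaussianPDFReal 0 v a * gaussianPDFReal 0 w (x - a)
      = gaussianPDFReal 0 (v + w) x
          * gaussianPDFReal 0 (v * w / (v + w)) (a - (v : ℝ) * x / ((v : ℝ) + w)) := by
  have hV : (0:ℝ) < v := lt_of_le_of_ne v.coe_nonneg (by exact_mod_cast (Ne.symm hv))
  have hW : (0:ℝ) < w := lt_of_le_of_ne w.coe_nonneg (by exact_mod_cast (Ne.symm hw))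
  have hVW : (0:ℝ) < (v:ℝ) + w := by linarith
  have hco : ((v * w / (v + w) : ℝ≥0) : ℝ) = (v : ℝ) * w / ((v:ℝ) + w) := by
    push_cast; ring
  simp only [gaussianPDFReal, NNReal.coe_add, hco, sub_zero]
  rw [mul_mul_mul_comm, mul_mul_mul_comm ((√(2 * π * ((v:ℝ)+w)))⁻¹)]
  congr 1
  · rw [← mul_inv, ← mul_inv, ← Real.sqrt_mul (by positivity), ← Real.sqrt_mul (by positivity)]
    congr 2
    field_simp
  · rw [← Real.exp_add, ← Real.exp_add]
    congr 1
    field_simp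
    ring

lemma my_conv_fun_eq (v w : ℝ≥0) (hv : v ≠ 0) (hw : w ≠ 0) (x : ℝ) :
    (fun a => gaussianPDFReal 0 v a * gaussianPDFReal 0 w (x - a))
      = fun a => gaussianPDFReal 0 (v + w) x
          * gaussianPDFReal ((v : ℝ) * x / ((v : ℝ) + w)) (v * w / (v + w)) a :=
  funext fun a => by rw [my_gaussian_pdf_conv v w hv hw x a, gaussianPDFReal_sub, zero_add]

lemma my_integrable_conv (v w : ℝ≥0) (hv : v ≠ 0) (hw : w ≠ 0) (x : ℝ) :
    Integrable (fun a => gaussianPDFReal 0 v a * gaussianPDFReal 0 w (x - a)) := by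
  rw [my_conv_fun_eq v w hv hw x]
  exact (integrable_gaussianPDFReal _ _).const_mul _

lemma my_integral_conv (v w : ℝ≥0) (hv : v ≠ 0) (hw : w ≠ 0) (x : ℝ) :
    ∫ a, gaussianPDFReal 0 v a * gaussianPDFReal 0 w (x - a)
      = gaussianPDFReal 0 (v + w) x := by
  have hvw : v * w / (v + w) ≠ 0 := by
    have : v + w ≠ 0 := fun h => hv (by simpa using (add_eq_zero.mp h).1)
    positivity
  rw [my_conv_fun_eq v w hv hw x, integral_const_mul,
    integral_gaussianPDFReal_eq_one _ hvw, mul_one]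

lemma my_lintegral_conv (v w : ℝ≥0) (hv : v ≠ 0) (hw : w ≠ 0) (y : ℝ) :
    ∫⁻ a, gaussianPDF 0 v a * gaussianPDF 0 w (y - a) = gaussianPDF 0 (v + w) y := by
  simp only [gaussianPDF]
  simp_rw [← ENNReal.ofReal_mul (gaussianPDFReal_nonneg _ _ _)]
  rw [← ofReal_integral_eq_lintegral_ofReal (my_integrable_conv v w hv hw y)
      (ae_of_all _ fun a => mul_nonneg (gaussianPDFReal_nonneg _ _ _) (gaussianPDFReal_nonneg _ _ _)),
    my_integral_conv v w hv hw y]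

lemma my_conv_zero_mean (v w : ℝ≥0) (hv : v ≠ 0) (hw : w ≠ 0) :
    ((gaussianReal 0 v).prod (gaussianReal 0 w)).map (fun p : ℝ × ℝ => p.1 + p.2)
      = gaussianReal 0 (v + w) := by
  have hvw : v + w ≠ 0 := fun h => hv (by simpa using (add_eq_zero.mp h).1)
  rw [gaussianReal_of_var_ne_zero 0 hv, gaussianReal_of_var_ne_zero 0 hw,
    gaussianReal_of_var_ne_zero 0 hvw]
  ext s hs
  rw [Measure.map_apply measurable_add hs, Measure.prod_apply (measurable_add hs)]
  have h1 : ∀ a : ℝ, (volume.withDensity (gaussianPDF 0 w)) (Prod.mk a ⁻¹' ((fun p : ℝ × ℝ => p.1 + p.2) ⁻¹' s))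
      = ∫⁻ y, s.indicator (fun _ => (1 : ℝ≥0∞)) (a + y) * gaussianPDF 0 w y := by
    intro a
    have hpre : MeasurableSet {y : ℝ | a + y ∈ s} := hs.preimage (measurable_const_add a)
    rw [show (Prod.mk a ⁻¹' ((fun p : ℝ × ℝ => p.1 + p.2) ⁻¹' s)) = {y : ℝ | a + y ∈ s} from rfl,
      withDensity_apply _ hpre, ← lintegral_indicator hpre _]
    congr 1
    funext y
    by_cases h : a + y ∈ s
    · simp [Set.indicator_of_mem, h, Set.indicator_of_mem (show y ∈ {y : ℝ | a + y ∈ s} from h)]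
    · simp [Set.indicator_of_notMem, h, Set.indicator_of_notMem (show y ∉ {y : ℝ | a + y ∈ s} from h)]
  simp_rw [h1]
  have h2 : ∀ a : ℝ, (∫⁻ y, s.indicator (fun _ => (1 : ℝ≥0∞)) (a + y) * gaussianPDF 0 w y)
      = ∫⁻ y, s.indicator (fun _ => (1 : ℝ≥0∞)) y * gaussianPDF 0 w (y - a) := by
    intro a
    rw [← lintegral_add_right_eq_self
      (fun y => s.indicator (fun _ => (1 : ℝ≥0∞)) y * gaussianPDF 0 w (y - a)) a]
    simp_rw [add_sub_cancel_right, add_comm]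
  simp_rw [h2]
  have hind : Measurable (s.indicator (fun _ : ℝ => (1 : ℝ≥0∞))) :=
    measurable_const.indicator hs
  have hmeas2 : Measurable (Function.uncurry fun a y =>
      gaussianPDF 0 v a * (s.indicator (fun _ => (1 : ℝ≥0∞)) y * gaussianPDF 0 w (y - a))) := by
    apply Measurable.mul
    · exact (measurable_gaussianPDF 0 v).comp measurable_fst
    · exact ((hind.comp measurable_snd).mul
        ((measurable_gaussianPDF 0 w).comp (measurable_snd.sub measurable_fst)))
  rw [lintegral_withDensity_eq_lintegral_mul _ (measurable_gaussianPDF 0 v)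
    (Measurable.lintegral_prod_right (f := fun a y =>
      s.indicator (fun _ => (1 : ℝ≥0∞)) y * gaussianPDF 0 w (y - a))
      ((hind.comp measurable_snd).mul
        ((measurable_gaussianPDF 0 w).comp (measurable_snd.sub measurable_fst))))]
  simp only [Pi.mul_apply]
  calc ∫⁻ a, gaussianPDF 0 v a * ∫⁻ y, s.indicator (fun _ => (1:ℝ≥0∞)) y * gaussianPDF 0 w (y - a)
      = ∫⁻ a, ∫⁻ y, gaussianPDF 0 v a * (s.indicator (fun _ => (1:ℝ≥0∞)) y * gaussianPDF 0 w (y - a)) := by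
        congr 1; funext a
        exact (lintegral_const_mul' _ _ ENNReal.ofReal_ne_top).symm
    _ = ∫⁻ y, ∫⁻ a, gaussianPDF 0 v a * (s.indicator (fun _ => (1:ℝ≥0∞)) y * gaussianPDF 0 w (y - a)) := by
        exact lintegral_lintegral_swap hmeas2.aemeasurable
    _ = ∫⁻ y, s.indicator (fun _ => (1:ℝ≥0∞)) y * ∫⁻ a, gaussianPDF 0 v a * gaussianPDF 0 w (y - a) := by
        congr 1; funext y
        have hne : s.indicator (fun _ => (1:ℝ≥0∞)) y ≠ ⊤ := by
          by_cases h : y ∈ s <;> simp [h]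
        rw [← lintegral_const_mul' _ _ hne]
        congr 1; funext a; ring
    _ = ∫⁻ y, s.indicator (fun _ => (1:ℝ≥0∞)) y * gaussianPDF 0 (v + w) y := by
        simp_rw [my_lintegral_conv v w hv hw]
    _ = (volume.withDensity (gaussianPDF 0 (v + w))) s := by
        rw [withDensity_apply _ hs, ← lintegral_indicator hs _]
        congr 1; funext y
        by_cases h : y ∈ s <;> simp [h]

lemma my_conv_gaussian (m m' : ℝ) (v w : ℝ≥0) :
    ((gaussianReal m v).prod (gaussianReal m' w)).map (fun p : ℝ × ℝ => p.1 + p.2)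
      = gaussianReal (m + m') (v + w) := by
  by_cases hv : v = 0
  · subst hv
    rw [gaussianReal_zero_var, Measure.dirac_prod, zero_add,
      Measure.map_map measurable_add (measurable_prodMk_left)]
    have : ((fun p : ℝ × ℝ => p.1 + p.2) ∘ Prod.mk m) = fun x => x + m := by
      funext x; simp [add_comm]
    rw [this, gaussianReal_map_add_const, add_comm m' m]
  by_cases hw : w = 0
  · subst hw
    rw [gaussianReal_zero_var, Measure.prod_dirac, add_zero,
      Measure.map_map measurable_add (measurable_prodMk_right)]
    have : ((fun p : ℝ × ℝ => p.1 + p.2) ∘ fun x : ℝ => (x, m')) = fun x => x + m' := rfl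
    rw [this, gaussianReal_map_add_const]
  -- reduce to zero mean
  have hshift : gaussianReal m v = (gaussianReal 0 v).map (· + m) := by
    rw [gaussianReal_map_add_const, zero_add]
  have hshift' : gaussianReal m' w = (gaussianReal 0 w).map (· + m') := by
    rw [gaussianReal_map_add_const, zero_add]
  rw [hshift, hshift',
    Measure.map_prod_map _ _ (measurable_add_const m) (measurable_add_const m'),
    Measure.map_map measurable_add ((measurable_add_const m).prodMap (measurable_add_const m'))]
  have hcomp : ((fun p : ℝ × ℝ => p.1 + p.2) ∘ Prod.map (· + m) (· + m'))
      = (fun x => x + (m + m')) ∘ (fun p : ℝ × ℝ => p.1 + p.2) := by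
    funext p; simp [Prod.map]; ring
  rw [hcomp, ← Measure.map_map (measurable_add_const (m + m')) measurable_add,
    my_conv_zero_mean v w hv hw, gaussianReal_map_add_const, zero_add]

lemma my_indep_sum {Ω : Type*} [MeasurableSpace Ω] (P : Measure Ω) [IsProbabilityMeasure P]
    {X Y : Ω → ℝ} (hX : Measurable X) (hY : Measurable Y) (hXY : IndepFun X Y P)
    {m m' : ℝ} {v w : ℝ≥0} (hXl : P.map X = gaussianReal m v) (hYl : P.map Y = gaussianReal m' w) :
    P.map (fun ω => X ω + Y ω) = gaussianReal (m + m') (v + w) := by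
  have h := (indepFun_iff_map_prod_eq_prod_map_map hX.aemeasurable hY.aemeasurable).mp hXY
  have : (fun ω => X ω + Y ω) = (fun p : ℝ × ℝ => p.1 + p.2) ∘ (fun ω => (X ω, Y ω)) := rfl
  rw [this, ← Measure.map_map measurable_add (hX.prodMk hY), h, hXl, hYl, my_conv_gaussian]

/-- DDPM forward process: starting from the constant `z₀` and applying
`z_t = √(1-β_t)·z_{t-1} + √β_t·ε_t` with i.i.d. standard Gaussian noise `ε_t`,
the marginal of `z_t` is `N(√ᾱ_t · z₀, 1 - ᾱ_t)` where `ᾱ_t = ∏_{s=1}^t (1 - β_s)`. -/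
theorem ddpm_forward_marginal
    {Ω : Type*} [MeasurableSpace Ω] (P : Measure Ω) [IsProbabilityMeasure P]
    (z₀ : ℝ) (T : ℕ) (β : ℕ → ℝ)
    (hβ : ∀ t, 1 ≤ t → t ≤ T → β t ∈ Set.Ioo (0 : ℝ) 1)
    (ε : ℕ → Ω → ℝ) (hεmeas : ∀ t, Measurable (ε t))
    (hεindep : iIndepFun ε P)
    (hεlaw : ∀ t, P.map (ε t) = gaussianReal 0 1)
    (z : ℕ → Ω → ℝ)
    (hz0 : z 0 = fun _ => z₀)
    (hzrec : ∀ t, 1 ≤ t → t ≤ T →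
      z t = fun ω => Real.sqrt (1 - β t) * z (t - 1) ω + Real.sqrt (β t) * ε t ω) :
    ∀ t ≤ T,
      P.map (z t) =
        gaussianReal (Real.sqrt (∏ s ∈ Finset.Icc 1 t, (1 - β s)) * z₀)
          ((1 - ∏ s ∈ Finset.Icc 1 t, (1 - β s)).toNNReal) := by
  -- representation of `z n` as a measurable function of the noises `ε 1, …, ε n`
  have hrep : ∀ n, n ≤ T → ∃ G : ({x // x ∈ Finset.Icc 1 n} → ℝ) → ℝ,
      Measurable G ∧ z n = fun ω => G (fun i => ε i.1 ω) := by
    intro n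
    induction n with
    | zero =>
      intro _
      exact ⟨fun _ => z₀, measurable_const, hz0⟩
    | succ n ih =>
      intro hn
      obtain ⟨G, hGmeas, hGeq⟩ := ih (le_trans (Nat.le_succ n) hn)
      refine ⟨fun v => Real.sqrt (1 - β (n+1)) *
          G (fun i => v ⟨i.1, Finset.mem_Icc.mpr
            ⟨(Finset.mem_Icc.mp i.2).1, le_trans (Finset.mem_Icc.mp i.2).2 (Nat.le_succ n)⟩⟩)
        + Real.sqrt (β (n+1)) * v ⟨n+1, Finset.mem_Icc.mpr ⟨Nat.le_add_left 1 n, le_refl _⟩⟩,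
        ?_, ?_⟩
      · apply Measurable.add
        · exact ((hGmeas.comp (measurable_pi_lambda _
            (fun i => measurable_pi_apply _)))).const_mul _
        · exact (measurable_pi_apply _).const_mul _
      · rw [hzrec (n+1) (Nat.le_add_left 1 n) hn]
        funext ω
        simp only [Nat.add_sub_cancel]
        rw [hGeq]
  have hzmeas : ∀ n, n ≤ T → Measurable (z n) := by
    intro n hn
    obtain ⟨G, hGmeas, hGeq⟩ := hrep n hn
    rw [hGeq]
    exact hGmeas.comp (measurable_pi_lambda _ (fun i => hεmeas i.1))
  have hzindep : ∀ n, n + 1 ≤ T → IndepFun (z n) (ε (n+1)) P := by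
    intro n hn
    obtain ⟨G, hGmeas, hGeq⟩ := hrep n (le_trans (Nat.le_succ n) hn)
    have hdisj : Disjoint (Finset.Icc 1 n) ({n+1} : Finset ℕ) := by
      simp [Finset.disjoint_singleton_right]
    have h := (hεindep.indepFun_finset (Finset.Icc 1 n) {n+1} hdisj hεmeas).comp
      hGmeas (measurable_pi_apply (⟨n+1, Finset.mem_singleton_self _⟩ : ({n+1} : Finset ℕ)))
    rw [hGeq]
    exact h
  intro t
  induction t with
  | zero =>
    intro _
    rw [hz0, Measure.map_const]
    simp
  | succ n ih =>
    intro hn1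
    have hn : n ≤ T := le_trans (Nat.le_succ n) hn1
    have hb := hβ (n+1) (Nat.le_add_left 1 n) hn1
    set A : ℝ := ∏ s ∈ Finset.Icc 1 n, (1 - β s) with hA
    have hA0 : 0 ≤ A := Finset.prod_nonneg fun s hs => by
      have := hβ s (Finset.mem_Icc.mp hs).1 (le_trans (Finset.mem_Icc.mp hs).2 hn)
      linarith [this.2]
    have hA1 : A ≤ 1 := Finset.prod_le_one
      (fun s hs => by
        have := hβ s (Finset.mem_Icc.mp hs).1 (le_trans (Finset.mem_Icc.mp hs).2 hn)
        linarith [this.2])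
      (fun s hs => by
        have := hβ s (Finset.mem_Icc.mp hs).1 (le_trans (Finset.mem_Icc.mp hs).2 hn)
        linarith [this.1])
    have hprod : (∏ s ∈ Finset.Icc 1 (n+1), (1 - β s)) = A * (1 - β (n+1)) := by
      rw [Finset.prod_Icc_succ_top (Nat.le_add_left 1 n)]
    set c : ℝ := Real.sqrt (1 - β (n+1)) with hc
    set d : ℝ := Real.sqrt (β (n+1)) with hd
    rw [hzrec (n+1) (Nat.le_add_left 1 n) hn1]
    simp only [Nat.add_sub_cancel]
    -- law of c * z n
    have hXlaw : P.map (fun ω => c * z n ω) =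
        gaussianReal (c * (Real.sqrt A * z₀)) (⟨c^2, sq_nonneg _⟩ * (1 - A).toNNReal) := by
      have : (fun ω => c * z n ω) = (fun x => c * x) ∘ z n := rfl
      rw [this, ← Measure.map_map (measurable_const_mul c) (hzmeas n hn), ih hn,
        gaussianReal_map_const_mul]
      rfl
    have hYlaw : P.map (fun ω => d * ε (n+1) ω) =
        gaussianReal (d * 0) (⟨d^2, sq_nonneg _⟩ * 1) := by
      have : (fun ω => d * ε (n+1) ω) = (fun x => d * x) ∘ ε (n+1) := rfl
      rw [this, ← Measure.map_map (measurable_const_mul d) (hεmeas (n+1)), hεlaw (n+1),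
        gaussianReal_map_const_mul]
      rfl
    have hindep : IndepFun (fun ω => c * z n ω) (fun ω => d * ε (n+1) ω) P :=
      (hzindep n hn1).comp (measurable_const_mul c) (measurable_const_mul d)
    rw [my_indep_sum P ((hzmeas n hn).const_mul c) ((hεmeas (n+1)).const_mul d)
      hindep hXlaw hYlaw]
    have hc2 : c^2 = 1 - β (n+1) := Real.sq_sqrt (by linarith [hb.2])
    have hd2 : d^2 = β (n+1) := Real.sq_sqrt (le_of_lt hb.1)
    congr 1
    · -- means
      rw [mul_zero, add_zero, hprod, ← mul_assoc, hc, mul_comm (Real.sqrt (1 - β (n+1))),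
        ← Real.sqrt_mul hA0]
    · -- variances
      rw [hprod]
      apply NNReal.coe_injective
      show c^2 * ((1 - A).toNNReal : ℝ) + d^2 * 1 = ((1 - A * (1 - β (n+1))).toNNReal : ℝ)
      rw [Real.coe_toNNReal _ (by linarith), Real.coe_toNNReal _ (by nlinarith [hb.1]), hc2, hd2]
      ring
end

section
/- Let E be a finite-dimensional complex inner product space, let H : ℝ → (E →L[ℂ] E) be a differentiable family of continuous linear operators with each H(λ) self-adjoint, let ψ : ℝ → E be differentiable with ‖ψ(λ)‖ = 1 for all λ, and let Energy : ℝ → ℝ be such that H(λ)(ψ(λ)) = Energy(λ) • ψ(λ) for all λ. Then Energy is differentiable and its derivative satisfies Energy′(λ) = re⟪ψ(λ), (H′(λ))(ψ(λ))⟫, where H′(λ) is the derivative of the operator family at λ (Hellmann–Feynman theorem). -/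
open scoped ComplexInnerProductSpace

/-- **Hellmann–Feynman theorem.** Let `H λ` be a differentiable family of self-adjoint
continuous linear operators on a finite-dimensional complex inner product space, let
`ψ λ` be a differentiable family of normalized eigenvectors with eigenvalues `Energy λ`.
Then `Energy` is differentiable with derivative `Energy′(λ) = re ⟪ψ λ, H′(λ) (ψ λ)⟫`. -/
theorem hellmann_feynman
    {E : Type*} [NormedAddCommGroup E] [InnerProductSpace ℂ E] [FiniteDimensional ℂ E]
    (H : ℝ → (E →L[ℂ] E)) (H' : ℝ → (E →L[ℂ] E))
    (hH : ∀ lam : ℝ, HasDerivAt H (H' lam) lam)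
    (hself : ∀ (lam : ℝ) (x y : E), ⟪(H lam) x, y⟫ = ⟪x, (H lam) y⟫)
    (ψ : ℝ → E) (hψ : Differentiable ℝ ψ)
    (hnorm : ∀ lam : ℝ, ‖ψ lam‖ = 1)
    (Energy : ℝ → ℝ)
    (heig : ∀ lam : ℝ, (H lam) (ψ lam) = (Energy lam : ℂ) • ψ lam) :
    ∀ lam : ℝ, HasDerivAt Energy (RCLike.re ⟪ψ lam, (H' lam) (ψ lam)⟫) lam := by
  intro lam
  set ψ' : E := deriv ψ lam with hψ'def
  have hψd : HasDerivAt ψ ψ' lam := (hψ lam).hasDerivAt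
  -- inner self equals 1
  have hinner_self : ∀ t : ℝ, ⟪ψ t, ψ t⟫ = (1 : ℂ) := by
    intro t
    rw [inner_self_eq_norm_sq_to_K, hnorm t]
    norm_num
  -- the derivative of ⟪ψ, ψ⟫ is zero, hence ⟪ψ, ψ'⟫ + ⟪ψ', ψ⟫ = 0
  have hconst : HasDerivAt (fun t => ⟪ψ t, ψ t⟫) (0 : ℂ) lam := by
    have : (fun t : ℝ => ⟪ψ t, ψ t⟫) = fun _ => (1 : ℂ) := funext hinner_self
    rw [this]; exact hasDerivAt_const _ _
  have hsum : ⟪ψ lam, ψ'⟫ + ⟪ψ', ψ lam⟫ = 0 := by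
    have h2 : HasDerivAt (fun t => ⟪ψ t, ψ t⟫) (⟪ψ lam, ψ'⟫ + ⟪ψ', ψ lam⟫) lam :=
      HasDerivAt.inner ℂ hψd hψd
    exact h2.unique hconst
  -- Energy lam equals re ⟪ψ, H ψ⟫
  have hE : ∀ t : ℝ, Energy t = RCLike.re ⟪ψ t, (H t) (ψ t)⟫ := by
    intro t
    rw [heig t, inner_smul_right, hinner_self t, mul_one]
    simp
  -- derivative of t ↦ H t (ψ t)
  have hHψ : HasDerivAt (fun t => (H t) (ψ t)) ((H' lam) (ψ lam) + (H lam) ψ') lam := by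
    have hHr : HasDerivAt (fun t => (H t).restrictScalars ℝ) ((H' lam).restrictScalars ℝ) lam :=
      (ContinuousLinearMap.restrictScalarsL ℂ E E ℝ ℝ).hasFDerivAt.comp_hasDerivAt lam (hH lam)
    exact hHr.clm_apply hψd
  have hinner : HasDerivAt (fun t => ⟪ψ t, (H t) (ψ t)⟫)
      (⟪ψ lam, (H' lam) (ψ lam) + (H lam) ψ'⟫ + ⟪ψ', (H lam) (ψ lam)⟫) lam :=
    HasDerivAt.inner ℂ hψd hHψ
  have hre : HasDerivAt (fun t => RCLike.re ⟪ψ t, (H t) (ψ t)⟫)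
      (RCLike.re (⟪ψ lam, (H' lam) (ψ lam) + (H lam) ψ'⟫ + ⟪ψ', (H lam) (ψ lam)⟫)) lam :=
    (Complex.reCLM.hasFDerivAt.comp_hasDerivAt lam hinner)
  -- simplify the derivative value
  have hval : RCLike.re (⟪ψ lam, (H' lam) (ψ lam) + (H lam) ψ'⟫ + ⟪ψ', (H lam) (ψ lam)⟫)
      = RCLike.re ⟪ψ lam, (H' lam) (ψ lam)⟫ := by
    have h1 : ⟪ψ', (H lam) (ψ lam)⟫ = (Energy lam : ℂ) * ⟪ψ', ψ lam⟫ := by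
      rw [heig lam, inner_smul_right]
    have h2 : ⟪ψ lam, (H lam) ψ'⟫ = (Energy lam : ℂ) * ⟪ψ lam, ψ'⟫ := by
      rw [← hself lam, heig lam, inner_smul_left]
      simp [Complex.conj_ofReal]
    rw [inner_add_right, h1, h2]
    have : (Energy lam : ℂ) * ⟪ψ lam, ψ'⟫ + (Energy lam : ℂ) * ⟪ψ', ψ lam⟫ = 0 := by
      rw [← mul_add, hsum, mul_zero]
    congr 1
    linear_combination this
  rw [← hval]
  have hfun : Energy = fun t => RCLike.re ⟪ψ t, (H t) (ψ t)⟫ := funext hE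
  rw [hfun]
  exact hre
end
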